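/- If the cut monoid M_G of a graph G is seminormal, then G is K5-minor-free. -/

import Mathlib

/-! Basic definitions for cut monoids of finite simple graphs. -/

open Classical in
/-- The cut vector of a vertex set `A`, as a function on `Sym2 V`:
value `1` on pairs with exactly one element in `A`, and `0` otherwise. -/
noncomputable def cutVec {V : Type} (A : Set V) : Sym2 V → ℤ :=
  Sym2.lift ⟨fun v w => if ((v ∈ A) ↔ (w ∈ A)) then 0 else 1,
    fun v w => if_congr iff_comm rfl rfl⟩

variable {V : Type}

/-- The generators `(δ_A, 1)` of the cut monoid of `G`. -/
def cutGens (G : SimpleGraph V) : Set ((G.edgeSet → ℤ) × ℤ) :=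
  {p | ∃ A : Set V, p = (fun e => cutVec A e.1, 1)}

/-- The cut monoid `M_G` of a graph `G`. -/
def cutMonoid (G : SimpleGraph V) : AddSubmonoid ((G.edgeSet → ℤ) × ℤ) :=
  AddSubmonoid.closure (cutGens G)

/-- The group `gp(M_G)` generated by the cut monoid. -/
def cutGroup (G : SimpleGraph V) : AddSubgroup ((G.edgeSet → ℤ) × ℤ) :=
  AddSubgroup.closure (cutGens G)

/-- `M_G` is normal: every `x ∈ gp(M_G)` with `n • x ∈ M_G` for some `n ≥ 1` lies in `M_G`. -/
def CutNormal (G : SimpleGraph V) : Prop :=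
  ∀ x ∈ cutGroup G, (∃ n : ℕ, 1 ≤ n ∧ n • x ∈ cutMonoid G) → x ∈ cutMonoid G

/-- `M_G` is seminormal: every `x ∈ gp(M_G)` with `2 • x ∈ M_G` and `3 • x ∈ M_G`
lies in `M_G`. -/
def CutSeminormal (G : SimpleGraph V) : Prop :=
  ∀ x ∈ cutGroup G, 2 • x ∈ cutMonoid G → 3 • x ∈ cutMonoid G → x ∈ cutMonoid G

/-- Generators of the cone of `M_G`: nonnegative real multiples of the `(δ_A, 1)`. -/
noncomputable def cutConeGens (G : SimpleGraph V) : Set ((G.edgeSet → ℝ) × ℝ) :=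
  {q | ∃ (c : ℝ) (A : Set V), 0 ≤ c ∧
    q = c • ((fun e => ((cutVec A e.1 : ℤ) : ℝ), (1 : ℝ)))}

/-- The cone `cone(M_G)`: all finite nonnegative real combinations of the `(δ_A, 1)`. -/
noncomputable def cutCone (G : SimpleGraph V) : Set ((G.edgeSet → ℝ) × ℝ) :=
  (AddSubmonoid.closure (cutConeGens G) : Set ((G.edgeSet → ℝ) × ℝ))

/-- The canonical map from `ℤ^E × ℤ` to `ℝ^E × ℝ`. -/
noncomputable def toRealCut (G : SimpleGraph V) (p : (G.edgeSet → ℤ) × ℤ) :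
    (G.edgeSet → ℝ) × ℝ :=
  (fun e => ((p.1 e : ℤ) : ℝ), ((p.2 : ℤ) : ℝ))

/-- `int(M_G)`: elements of `M_G` mapping into the topological interior of `cone(M_G)`. -/
noncomputable def cutInterior (G : SimpleGraph V) : Set ((G.edgeSet → ℤ) × ℤ) :=
  {p | p ∈ cutMonoid G ∧ toRealCut G p ∈ interior (cutCone G)}

/-- The set of last coordinates `α ∈ ℕ` realized by elements of `int(M_G)`;
its least element is `m(G)`. -/
noncomputable def cutDegrees (G : SimpleGraph V) : Set ℕ :=
  {α | ∃ x : G.edgeSet → ℤ, ((x, (α : ℤ)) : (G.edgeSet → ℤ) × ℤ) ∈ cutInterior G}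

/-- `H` is a minor of `G`: branch sets `B u` are nonempty, pairwise disjoint,
induce connected subgraphs, and edges of `H` are witnessed by edges of `G`. -/
def GraphMinor {W V : Type} (H : SimpleGraph W) (G : SimpleGraph V) : Prop :=
  ∃ B : W → Set V,
    (∀ u, (B u).Nonempty) ∧
    (∀ u v, u ≠ v → Disjoint (B u) (B v)) ∧
    (∀ u, (G.induce (B u)).Connected) ∧
    (∀ u v, H.Adj u v → ∃ a ∈ B u, ∃ b ∈ B v, G.Adj a b)

/-- `G` is `K₅`-minor-free. -/
def K5Free (G : SimpleGraph V) : Prop :=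
  ¬ GraphMinor (⊤ : SimpleGraph (Fin 5)) G

/-- `G` is bipartite: vertices split into two parts so every edge joins the parts. -/
def BipartiteG (G : SimpleGraph V) : Prop :=
  ∃ s : Set V, ∀ ⦃v w⦄, G.Adj v w → ((v ∈ s ∧ w ∉ s) ∨ (w ∈ s ∧ v ∉ s))

/-- `G` has an induced cycle of length `n` (n ≥ 3): an induced-subgraph copy of the
cycle graph of length `n`. -/
def HasInducedCycleLen (G : SimpleGraph V) (n : ℕ) : Prop :=
  3 ≤ n ∧ Nonempty (SimpleGraph.cycleGraph n ↪g G)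

/-- `G` contains a triangle. -/
def HasTriangle (G : SimpleGraph V) : Prop :=
  ∃ a b c, G.Adj a b ∧ G.Adj b c ∧ G.Adj a c

/-- `G` is chordal: every induced cycle is a triangle. -/
def ChordalG (G : SimpleGraph V) : Prop :=
  ∀ n, HasInducedCycleLen G n → n = 3

/-- `G` is bridgeless: every edge lies on some cycle. -/
def BridgelessG (G : SimpleGraph V) : Prop :=
  ∀ e ∈ G.edgeSet, ∃ (v : V) (c : G.Walk v v), c.IsCycle ∧ e ∈ c.edges

/-- `G` is (isomorphic to) a cycle of length `n`. -/
def IsCycleOfLen (G : SimpleGraph V) (n : ℕ) : Prop :=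
  3 ≤ n ∧ Nonempty (G ≃g SimpleGraph.cycleGraph n)

/-- `G` is a cycle. -/
def IsCycleGraph (G : SimpleGraph V) : Prop :=
  ∃ n, IsCycleOfLen G n

/-- `G` is a `0`-sum of `G1` and `G2`: copies of `G1`, `G2` cover `G`,
overlap in exactly one vertex, and every edge comes from `G1` or `G2`. -/
def IsZeroSumDecomp {V1 V2 : Type} (G : SimpleGraph V) (G1 : SimpleGraph V1)
    (G2 : SimpleGraph V2) : Prop :=
  ∃ (f1 : V1 ↪ V) (f2 : V2 ↪ V),
    Set.range f1 ∪ Set.range f2 = Set.univ ∧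
    (∃ v, Set.range f1 ∩ Set.range f2 = {v}) ∧
    (∀ a b, G.Adj a b ↔
      ((∃ x y, f1 x = a ∧ f1 y = b ∧ G1.Adj x y) ∨
       (∃ x y, f2 x = a ∧ f2 y = b ∧ G2.Adj x y)))

/-- `G` is a `1`-sum of `G1` and `G2` along a common edge. -/
def IsOneSumDecomp {V1 V2 : Type} (G : SimpleGraph V) (G1 : SimpleGraph V1)
    (G2 : SimpleGraph V2) : Prop :=
  ∃ (f1 : V1 ↪ V) (f2 : V2 ↪ V) (v w : V),
    v ≠ w ∧
    Set.range f1 ∪ Set.range f2 = Set.univ ∧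
    Set.range f1 ∩ Set.range f2 = {v, w} ∧
    (∃ x y, f1 x = v ∧ f1 y = w ∧ G1.Adj x y) ∧
    (∃ x y, f2 x = v ∧ f2 y = w ∧ G2.Adj x y) ∧
    (∀ a b, G.Adj a b ↔
      ((∃ x y, f1 x = a ∧ f1 y = b ∧ G1.Adj x y) ∨
       (∃ x y, f2 x = a ∧ f2 y = b ∧ G2.Adj x y)))

/-- Ring graphs: obtained, up to adding isolated vertices, from finitely many
(finite) trees and cycles by iterated `0`-sums and `1`-sums. -/
inductive IsRingGraph : {V : Type} → SimpleGraph V → Prop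
  | tree {V : Type} (G : SimpleGraph V) :
      Finite V → G.Connected → G.IsAcyclic → IsRingGraph G
  | cycle {V : Type} (G : SimpleGraph V) : IsCycleGraph G → IsRingGraph G
  | zeroSum {V1 V2 V : Type} {G1 : SimpleGraph V1} {G2 : SimpleGraph V2}
      {G : SimpleGraph V} :
      IsRingGraph G1 → IsRingGraph G2 → IsZeroSumDecomp G G1 G2 → IsRingGraph G
  | oneSum {V1 V2 V : Type} {G1 : SimpleGraph V1} {G2 : SimpleGraph V2}
      {G : SimpleGraph V} :
      IsRingGraph G1 → IsRingGraph G2 → IsOneSumDecomp G G1 G2 → IsRingGraph G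
  | addIsolated {V W : Type} {G : SimpleGraph V} {H : SimpleGraph W} (f : V ↪ W) :
      IsRingGraph G → (∀ a b, H.Adj a b ↔ ∃ x y, f x = a ∧ f y = b ∧ G.Adj x y) →
      IsRingGraph H

/-- An edge of an induced subgraph is an edge of the ambient graph. -/
lemma induce_edge_mem (G : SimpleGraph V) (s : Set V) (e : Sym2 s)
    (he : e ∈ (G.induce s).edgeSet) : e.map Subtype.val ∈ G.edgeSet := by
  induction e using Sym2.ind with
  | _ a b =>
    rw [Sym2.map_pair_eq, SimpleGraph.mem_edgeSet]
    exact he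

/-- Restriction of a vector indexed by the edges of `G` to the edges of the
subgraph of `G` induced on `s`. -/
noncomputable def restrictCut (G : SimpleGraph V) (s : Set V) (p : G.edgeSet → ℤ) :
    (G.induce s).edgeSet → ℤ :=
  fun e => p ⟨e.1.map Subtype.val, induce_edge_mem G s e.1 e.2⟩

/-! Let `B` be the branch sets of a `K₅` minor and `c : V → Fin 5` a labelling with `c = u` on
`B u`. The point `z = (2 · [c a ≠ c b], 4)` has `2z` and `3z` in `M_G`: they are sums of pullbacks
along `c` of 8, resp. 12, cuts of `K₅` covering every edge 4, resp. 6, times. Hence `z = 3z - 2z`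
lies in `gp(M_G)`, and seminormality puts `z` in `M_G`, i.e. `z` is a sum of four cuts. These
vanish inside the connected branch sets, so they are constant there, and together they cut every
edge between two branch sets exactly twice. Read at one point of each branch set as `±1`-vectors,
the four cuts give five pairwise orthogonal nonzero vectors in `ℝ⁴`, which is absurd. -/

open Finset

section Cuts

variable {W : Type}

open Classical in
lemma cutVec_mk (A : Set V) (a b : V) :
    cutVec A s(a, b) = if (a ∈ A ↔ b ∈ A) then 0 else 1 :=
  Sym2.lift_mk _ a b

lemma cutVec_nonneg (A : Set V) (e : Sym2 V) : 0 ≤ cutVec A e := by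
  induction e using Sym2.ind with
  | _ a b => rw [cutVec_mk]; split <;> norm_num

lemma cutVec_eq_zero_iff (A : Set V) (a b : V) : cutVec A s(a, b) = 0 ↔ (a ∈ A ↔ b ∈ A) := by
  rw [cutVec_mk]
  split <;> simp_all

lemma cutVec_congr {A : Set V} {a b a' b' : V} (ha : a ∈ A ↔ a' ∈ A) (hb : b ∈ A ↔ b' ∈ A) :
    cutVec A s(a, b) = cutVec A s(a', b') := by
  classical
  simp only [cutVec_mk, ha, hb]

lemma cutVec_coe_finset [DecidableEq W] (S : Finset W) (p q : W) :
    cutVec (S : Set W) s(p, q) = if (p ∈ S ↔ q ∈ S) then 0 else 1 := by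
  simp only [cutVec_mk, mem_coe]

lemma cutVec_preimage (c : V → W) (A : Set W) (e : Sym2 V) :
    cutVec (c ⁻¹' A) e = cutVec A (e.map c) := by
  induction e using Sym2.ind with
  | _ a b => classical simp only [Sym2.map_mk, cutVec_mk, Set.mem_preimage]

open Classical in
lemma hammingDist_decide_mem_eq_sum_cutVec {n : ℕ} (A : Fin n → Set V) (a b : V) :
    (hammingDist (fun i => decide (a ∈ A i)) (fun i => decide (b ∈ A i)) : ℤ) =
      ∑ i, cutVec (A i) s(a, b) := by
  simp only [hammingDist, card_filter, Nat.cast_sum, cutVec_mk]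
  refine sum_congr rfl fun i _ => ?_
  by_cases ha : a ∈ A i <;> by_cases hb : b ∈ A i <;> simp [ha, hb]

lemma mem_iff_mem_of_sum_cutVec_eq_zero {G : SimpleGraph V} {s : Set V}
    (hs : (G.induce s).Preconnected) {n : ℕ} (A : Fin n → Set V)
    (h0 : ∀ a ∈ s, ∀ b ∈ s, G.Adj a b → ∑ i, cutVec (A i) s(a, b) = 0) (i : Fin n)
    {a b : V} (ha : a ∈ s) (hb : b ∈ s) : a ∈ A i ↔ b ∈ A i := by
  have hwalk : ∀ x y : s, (G.induce s).Walk x y → ((x : V) ∈ A i ↔ (y : V) ∈ A i) := by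
    intro x y w
    induction w with
    | nil => rfl
    | cons hxy _ ih =>
      have h := h0 _ (Subtype.property _) _ (Subtype.property _) hxy
      rw [sum_eq_zero_iff_of_nonneg fun j _ => cutVec_nonneg _ _] at h
      exact ((cutVec_eq_zero_iff _ _ _).mp (h i (mem_univ _))).trans ih
  exact hwalk ⟨a, ha⟩ ⟨b, hb⟩ (hs _ _).some

end Cuts

/-- Binary words of length `n` at pairwise distance `n / 2` are, as `±1`-vectors, pairwise
orthogonal in `ℝⁿ`. -/
lemma card_le_of_two_mul_hammingDist_eq {ι κ : Type} [Fintype ι] [Fintype κ] [Nonempty κ]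
    (σ : ι → κ → Bool)
    (hσ : ∀ u v, u ≠ v → 2 * hammingDist (σ u) (σ v) = Fintype.card κ) :
    Fintype.card ι ≤ Fintype.card κ := by
  classical
  let x : ι → EuclideanSpace ℝ κ := fun u => WithLp.toLp 2 fun i => if σ u i then 1 else -1
  have hx : ∀ u, x u ≠ 0 := by
    intro u hu
    have := congrArg (· (Classical.arbitrary κ)) hu
    by_cases h : σ u (Classical.arbitrary κ) <;> simp [x, h] at this
  have horth : Pairwise fun u v => inner ℝ (x u) (x v) = 0 := by
    intro u v huv
    have hinner : inner ℝ (x u) (x v) =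
        ∑ i, ((1 : ℝ) - 2 * if σ u i ≠ σ v i then 1 else 0) := by
      rw [PiLp.inner_apply]
      refine sum_congr rfl fun i _ => ?_
      by_cases hu : σ u i <;> by_cases hv : σ v i <;> norm_num [x, hu, hv]
    have hd : (2 * hammingDist (σ u) (σ v) : ℝ) = Fintype.card κ := by exact_mod_cast hσ u v huv
    rw [hinner, sum_sub_distrib, ← mul_sum, sum_boole]
    simp only [hammingDist] at hd
    simp [hd]
  simpa using (linearIndependent_of_ne_zero_of_inner_eq_zero hx horth).fintype_card_le_finrank

section CutMonoid

variable {W : Type} (G : SimpleGraph V)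

noncomputable def cutGen (A : Set V) : (G.edgeSet → ℤ) × ℤ := (fun e => cutVec A e.1, 1)

lemma cutGen_mem_cutMonoid (A : Set V) : cutGen G A ∈ cutMonoid G :=
  AddSubmonoid.subset_closure ⟨A, rfl⟩

lemma cutMonoid_le_cutGroup : cutMonoid G ≤ (cutGroup G).toAddSubmonoid :=
  AddSubmonoid.closure_le.mpr fun _ hx => AddSubgroup.subset_closure hx

lemma exists_eq_sum_cutGen_of_mem_cutMonoid {p : (G.edgeSet → ℤ) × ℤ}
    (hp : p ∈ cutMonoid G) : ∃ (n : ℕ) (A : Fin n → Set V), p = ∑ i, cutGen G (A i) := by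
  induction hp using AddSubmonoid.closure_induction with
  | mem p hp =>
    obtain ⟨A, rfl⟩ := hp
    exact ⟨1, fun _ => A, by simp [cutGen]⟩
  | zero => exact ⟨0, Fin.elim0, by simp⟩
  | add p q _ _ hp hq =>
    obtain ⟨n, A, rfl⟩ := hp
    obtain ⟨m, B, rfl⟩ := hq
    exact ⟨n + m, Fin.append A B, by simp [Fin.sum_univ_add]⟩

open Classical in
noncomputable def crossInd (c : V → W) (e : Sym2 V) : ℤ := if (e.map c).IsDiag then 0 else 1

open Classical in
lemma crossInd_mk (c : V → W) (a b : V) : crossInd c s(a, b) = if c a = c b then 0 else 1 := by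
  simp [crossInd]

noncomputable def crossPoint (c : V → W) (m : ℕ) : (G.edgeSet → ℤ) × ℤ :=
  (fun e => m * crossInd c e.1, 2 * m)

lemma nsmul_crossPoint (c : V → W) (k m : ℕ) :
    k • crossPoint G c m = crossPoint G c (k * m) := by
  ext <;> simp [crossPoint] <;> ring

lemma sum_cutGen_preimage_eq_crossPoint [DecidableEq W] (c : V → W) (F : Finset (Finset W))
    (m : ℕ) (hcard : #F = 2 * m)
    (hF : ∀ p q, ∑ S ∈ F, cutVec (S : Set W) s(p, q) = if p = q then 0 else (m : ℤ)) :
    ∑ S ∈ F, cutGen G (c ⁻¹' S) = crossPoint G c m := by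
  refine Prod.ext (funext fun e => ?_) ?_
  · simp only [cutGen, crossPoint, crossInd, Prod.fst_sum, Finset.sum_apply, cutVec_preimage]
    induction e.1 using Sym2.ind with
    | _ a b => simp [hF]
  · simp [cutGen, crossPoint, Prod.snd_sum, hcard]

lemma crossPoint_mem_cutMonoid_of_sum_cutVec [DecidableEq W] (c : V → W)
    (F : Finset (Finset W)) (m : ℕ) (hcard : #F = 2 * m)
    (hF : ∀ p q, ∑ S ∈ F, cutVec (S : Set W) s(p, q) = if p = q then 0 else (m : ℤ)) :
    crossPoint G c m ∈ cutMonoid G :=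
  sum_cutGen_preimage_eq_crossPoint G c F m hcard hF ▸
    sum_mem fun _ _ => cutGen_mem_cutMonoid G _

/-- The six 2-subsets of `{0, 1, 2, 3}` together with `{4}` cut every edge of `K₅` four times;
`∅` adds the zero cut. -/
lemma crossPoint_four_mem_cutMonoid (c : V → Fin 5) : crossPoint G c 4 ∈ cutMonoid G :=
  crossPoint_mem_cutMonoid_of_sum_cutVec G c
    (insert ∅ (insert {4} (powersetCard 2 (univ.erase 4)))) 4 (by decide)
    (by simp only [cutVec_coe_finset]; decide)

/-- The ten 2-subsets of `Fin 5` cut every edge of `K₅` six times; `∅` and `univ` add zero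
cuts. -/
lemma crossPoint_six_mem_cutMonoid (c : V → Fin 5) : crossPoint G c 6 ∈ cutMonoid G :=
  crossPoint_mem_cutMonoid_of_sum_cutVec G c
    (insert ∅ (insert univ (powersetCard 2 univ))) 6 (by decide)
    (by simp only [cutVec_coe_finset]; decide)

end CutMonoid

theorem card_le_of_crossPoint_mem_cutMonoid {W : Type} [Fintype W] {G : SimpleGraph V}
    {B : W → Set V} {c : V → W} {m : ℕ} (hm : 0 < m)
    (hconn : ∀ u, (G.induce (B u)).Connected)
    (hadj : ∀ u v, u ≠ v → ∃ a ∈ B u, ∃ b ∈ B v, G.Adj a b)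
    (hc : ∀ u, ∀ a ∈ B u, c a = u) (hmem : crossPoint G c m ∈ cutMonoid G) :
    Fintype.card W ≤ 2 * m := by
  classical
  obtain ⟨n, A, hA⟩ := exists_eq_sum_cutGen_of_mem_cutMonoid G hmem
  have hn : n = 2 * m := by
    have := congrArg Prod.snd hA
    simp only [crossPoint, cutGen, Prod.snd_sum, sum_const, card_univ, Fintype.card_fin,
      nsmul_eq_mul, mul_one] at this
    exact_mod_cast this.symm
  have hedge : ∀ a b (hab : G.Adj a b), ∑ i, cutVec (A i) s(a, b) = m * crossInd c s(a, b) :=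
    fun a b hab => by simpa [crossPoint, cutGen, Prod.fst_sum] using
      (congrFun (congrArg Prod.fst hA) ⟨s(a, b), hab⟩).symm
  have hconst : ∀ i u, ∀ a ∈ B u, ∀ b ∈ B u, (a ∈ A i ↔ b ∈ A i) :=
    fun i u _ ha _ hb => mem_iff_mem_of_sum_cutVec_eq_zero (hconn u).preconnected A
      (fun a ha b hb hab => by simp [hedge a b hab, crossInd_mk, hc u a ha, hc u b hb]) i ha hb
  let pt : W → V := fun u => (hconn u).nonempty.some
  have hpt : ∀ u, pt u ∈ B u := fun u => ((hconn u).nonempty.some).2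
  have : Nonempty (Fin n) := ⟨⟨0, by omega⟩⟩
  have hσ : ∀ u v, u ≠ v → 2 * hammingDist (fun i => decide (pt u ∈ A i))
      (fun i => decide (pt v ∈ A i)) = Fintype.card (Fin n) := by
    intro u v huv
    obtain ⟨a, ha, b, hb, hab⟩ := hadj u v huv
    have hdist : (hammingDist (fun i => decide (pt u ∈ A i)) fun i => decide (pt v ∈ A i) : ℤ)
        = m := by
      rw [hammingDist_decide_mem_eq_sum_cutVec]
      simp_rw [cutVec_congr (hconst _ u _ (hpt u) a ha) (hconst _ v _ (hpt v) b hb)]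
      simp [hedge a b hab, crossInd_mk, hc u a ha, hc v b hb, huv]
    rw [Fintype.card_fin]
    omega
  simpa [hn] using card_le_of_two_mul_hammingDist_eq _ hσ

lemma exists_forall_mem_eq_of_pairwise_disjoint {W : Type} [Nonempty W] {B : W → Set V}
    (hB : ∀ u v, u ≠ v → Disjoint (B u) (B v)) : ∃ c : V → W, ∀ u, ∀ a ∈ B u, c a = u := by
  classical
  refine ⟨fun a => if h : ∃ u, a ∈ B u then h.choose else Classical.arbitrary W,
    fun u a ha => ?_⟩
  have h : ∃ u, a ∈ B u := ⟨u, ha⟩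
  dsimp only
  rw [dif_pos h]
  by_contra hne
  exact Set.disjoint_left.mp (hB _ _ hne) h.choose_spec ha

theorem seminormal_K5Free_general {V : Type} (G : SimpleGraph V)
    (h : CutSeminormal G) : K5Free G := by
  rintro ⟨B, -, hdisj, hconn, hadj⟩
  obtain ⟨c, hc⟩ := exists_forall_mem_eq_of_pairwise_disjoint hdisj
  have h2 : 2 • crossPoint G c 2 ∈ cutMonoid G := by
    rw [nsmul_crossPoint]
    exact crossPoint_four_mem_cutMonoid G c
  have h3 : 3 • crossPoint G c 2 ∈ cutMonoid G := by
    rw [nsmul_crossPoint]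
    exact crossPoint_six_mem_cutMonoid G c
  have hgp : crossPoint G c 2 ∈ cutGroup G := by
    have h32 : crossPoint G c 2 = 3 • crossPoint G c 2 - 2 • crossPoint G c 2 := by abel
    rw [h32]
    exact sub_mem (cutMonoid_le_cutGroup G h3) (cutMonoid_le_cutGroup G h2)
  have hcard := card_le_of_crossPoint_mem_cutMonoid two_pos hconn
    (fun u v huv => hadj u v ((SimpleGraph.top_adj u v).mpr huv)) hc (h _ hgp h2 h3)
  simp at hcard

/-- If the cut monoid of `G` is seminormal, then `G` is
`K₅`-minor-free. -/
theorem seminormal_K5Free {V : Type} [Fintype V] (G : SimpleGraph V)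
    (h : CutSeminormal G) : K5Free G :=
  seminormal_K5Free_general G h
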